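/- With ξ₀ = −0.1, y₀ = 0.9 and m = 0.6645, the minimal value ξ* = ξ₀ + (1/m)·ln(y₀/0.4) − (2.5/m)·(y₀ − 0.4) satisfies ξ* < −3/4; consequently the corresponding minimal prey level x* = exp(ξ*/0.02) satisfies x* < 10⁻¹⁶ (an 'atto-fox'-scale value). -/
import Mathlib


lemma aux_log_bound : Real.log (0.9 / 0.4) < 0.818 := by
  have h64 : ((1 : ℝ) + 0.818 / 64) ^ (64 : ℕ) ≤ Real.exp 0.818 := by
    have h1 : (1 : ℝ) + 0.818 / 64 ≤ Real.exp (0.818 / 64) := by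
      have := Real.add_one_le_exp ((0.818 : ℝ) / 64)
      linarith
    calc ((1 : ℝ) + 0.818 / 64) ^ (64 : ℕ)
        ≤ (Real.exp (0.818 / 64)) ^ (64 : ℕ) :=
          pow_le_pow_left₀ (by norm_num) h1 64
      _ = Real.exp (0.818 / 64 * 64) := by
          rw [← Real.exp_nat_mul]; ring_nf
      _ = Real.exp 0.818 := by norm_num
  have h2 : (0.9 : ℝ) / 0.4 < Real.exp 0.818 := by
    have : (0.9 : ℝ) / 0.4 < ((1 : ℝ) + 0.818 / 64) ^ (64 : ℕ) := by norm_num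
    linarith
  have := (Real.log_lt_iff_lt_exp (by norm_num : (0:ℝ) < 0.9 / 0.4)).2 h2
  exact this

lemma aux_exp_big : (10 : ℝ) ^ (16 : ℕ) < Real.exp 37.5 := by
  have h1 : Real.exp 37.5 = Real.exp 1 ^ (37 : ℕ) * Real.exp 0.5 := by
    rw [← Real.exp_nat_mul, ← Real.exp_add]; norm_num
  have h2 : (2.7182818283 : ℝ) ^ (37 : ℕ) < Real.exp 1 ^ (37 : ℕ) :=
    pow_lt_pow_left₀ Real.exp_one_gt_d9 (by norm_num) (by norm_num)
  have h3 : (1.5 : ℝ) ≤ Real.exp 0.5 := by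
    have := Real.add_one_le_exp (0.5 : ℝ); linarith
  have h4 : (10 : ℝ) ^ (16 : ℕ) < (2.7182818283 : ℝ) ^ (37 : ℕ) * 1.5 := by norm_num
  have hpos : (0 : ℝ) < (2.7182818283 : ℝ) ^ (37 : ℕ) := by positivity
  calc (10 : ℝ) ^ (16 : ℕ) < (2.7182818283 : ℝ) ^ (37 : ℕ) * 1.5 := h4
    _ ≤ Real.exp 1 ^ (37 : ℕ) * Real.exp 0.5 := by
        apply mul_le_mul h2.le h3 (by norm_num) (by positivity)
    _ = Real.exp 37.5 := h1.symm

/-- With `ξ₀ = −0.1`, `y₀ = 0.9`, `m = 0.6645`, the minimal logarithmic prey value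
`ξ* = ξ₀ + (1/m)·ln(y₀/0.4) − (2.5/m)·(y₀ − 0.4)` satisfies `ξ* < −3/4`, hence the
corresponding minimal prey level `x* = exp(ξ*/0.02)` satisfies `x* < 10⁻¹⁶`. -/
theorem stmt_13 :
    (-0.1 : ℝ) + (1/0.6645) * Real.log (0.9 / 0.4) - (2.5/0.6645) * (0.9 - 0.4)
      < -(3/4) ∧
    Real.exp (((-0.1 : ℝ) + (1/0.6645) * Real.log (0.9 / 0.4)
        - (2.5/0.6645) * (0.9 - 0.4)) / 0.02) < 1 / 10 ^ 16 := by
  have hlog := aux_log_bound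
  have hfirst : (-0.1 : ℝ) + (1/0.6645) * Real.log (0.9 / 0.4)
      - (2.5/0.6645) * (0.9 - 0.4) < -(3/4) := by
    nlinarith [hlog]
  refine ⟨hfirst, ?_⟩
  have harg : ((-0.1 : ℝ) + (1/0.6645) * Real.log (0.9 / 0.4)
      - (2.5/0.6645) * (0.9 - 0.4)) / 0.02 < -37.5 := by
    have : ((-0.1 : ℝ) + (1/0.6645) * Real.log (0.9 / 0.4)
        - (2.5/0.6645) * (0.9 - 0.4)) / 0.02
        = 50 * ((-0.1 : ℝ) + (1/0.6645) * Real.log (0.9 / 0.4)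
        - (2.5/0.6645) * (0.9 - 0.4)) := by ring
    rw [this]; linarith
  calc Real.exp (((-0.1 : ℝ) + (1/0.6645) * Real.log (0.9 / 0.4)
        - (2.5/0.6645) * (0.9 - 0.4)) / 0.02)
      < Real.exp (-37.5) := Real.exp_lt_exp.2 harg
    _ < 1 / 10 ^ 16 := by
        rw [Real.exp_neg]
        rw [one_div]
        exact inv_strictAnti₀ (by positivity) aux_exp_big
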